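/- Let A, M ∈ Mₙ(F₃) satisfy A³ = A² + A + I, M² = 0, and (A + M)³ = A + M. Then M = 0. In particular, if additionally A³ ≠ A, there is no square-zero matrix M making A + M diagonalizable. -/

import Mathlib

/-!
Put `N = M A`. Since `M² = 0`, `((A + M)³ - (A + M)) M = 0` reads
`(A² + 1) M + A M A M + M A² M = 0`. Multiplying it on the left by `M` gives `M A² M = -N² M`;
multiplying it by `M A` and `M A²` and reducing with this and `A³ = A² + A + 1` gives
`(N³ - N² - N) M = 0` and `(N⁴ - N³ + N² - N) M = 0` in characteristic 3. These two polynomials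
have greatest common divisor `x` over `𝔽₃`, so `M A M = N M = 0`, hence `M A² M = 0` and
`(A² + 1) M = 0`. Finally `A² + 1` is invertible, with inverse `A² - A + 1`, because `x² + 1` and
`x³ - x² - x - 1` are coprime over `𝔽₃`. For the second claim, a diagonalizable matrix `D` over
`𝔽₃` satisfies `D³ = D`.
-/

open Matrix

def IsDiagonalizable {F n : Type*} [Field F] [Fintype n] [DecidableEq n]
    (D : Matrix n n F) : Prop :=
  ∃ U : Matrix n n F, IsUnit U ∧ (U⁻¹ * D * U).IsDiag

section CharThree

-- `(3 : R) = 0` rather than `CharP R 3`, so that the zero ring (matrices of size 0) is covered.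
variable {R : Type*} [Ring R] {A M : R}

theorem sq_add_one_mul_add_eq_zero (hA : A ^ 3 = A ^ 2 + A + 1) (hM : M ^ 2 = 0)
    (hB : (A + M) ^ 3 = A + M) :
    (A ^ 2 + 1) * M + A * M * A * M + M * A ^ 2 * M = 0 :=
  calc (A ^ 2 + 1) * M + A * M * A * M + M * A ^ 2 * M
      = ((A + M) ^ 3 - (A + M)) * M - (A ^ 3 - (A ^ 2 + A + 1)) * M
        - (A ^ 2 * M ^ 2 + A * M ^ 2 * M + M * A * M ^ 2 + M ^ 2 * A * M + M ^ 2 * M ^ 2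
          - M ^ 2) := by noncomm_ring
    _ = 0 := by rw [hB, hA, hM]; simp

theorem mul_sq_mul_add_eq_zero (hM : M ^ 2 = 0)
    (he : (A ^ 2 + 1) * M + A * M * A * M + M * A ^ 2 * M = 0) :
    M * A ^ 2 * M + (M * A) ^ 2 * M = 0 :=
  calc M * A ^ 2 * M + (M * A) ^ 2 * M
      = M * ((A ^ 2 + 1) * M + A * M * A * M + M * A ^ 2 * M) - M ^ 2 - M ^ 2 * A ^ 2 * M := by
        noncomm_ring
    _ = 0 := by rw [he, hM]; simp

theorem mul_pow_three_mul_eq (h3 : (3 : R) = 0) (hA : A ^ 3 = A ^ 2 + A + 1) (hM : M ^ 2 = 0)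
    (he : (A ^ 2 + 1) * M + A * M * A * M + M * A ^ 2 * M = 0)
    (hD : M * A ^ 2 * M + (M * A) ^ 2 * M = 0) :
    (M * A) ^ 3 * M = (M * A) ^ 2 * M + M * A * M := by
  rw [← sub_eq_zero]
  calc (M * A) ^ 3 * M - ((M * A) ^ 2 * M + M * A * M)
      = M * A * ((A ^ 2 + 1) * M + A * M * A * M + M * A ^ 2 * M)
        - (M * A ^ 2 * M + (M * A) ^ 2 * M) * (1 + A * M)
        - M * A * (M * A ^ 2 * M + (M * A) ^ 2 * M)
        - M * (A ^ 3 - (A ^ 2 + A + 1)) * M - M ^ 2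
        + 3 * ((M * A) ^ 3 * M - M * A * M) := by noncomm_ring
    _ = 0 := by rw [he, hD, hA, hM, h3]; simp

theorem mul_pow_four_mul_eq (h3 : (3 : R) = 0) (hA : A ^ 3 = A ^ 2 + A + 1) (hM : M ^ 2 = 0)
    (he : (A ^ 2 + 1) * M + A * M * A * M + M * A ^ 2 * M = 0)
    (hD : M * A ^ 2 * M + (M * A) ^ 2 * M = 0) :
    (M * A) ^ 4 * M = (M * A) ^ 3 * M - (M * A) ^ 2 * M + M * A * M := by
  rw [← sub_eq_zero]
  calc (M * A) ^ 4 * M - ((M * A) ^ 3 * M - (M * A) ^ 2 * M + M * A * M)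
      = M * A ^ 2 * ((A ^ 2 + 1) * M + A * M * A * M + M * A ^ 2 * M)
        - 3 * (M * A ^ 2 * M + M * A * M)
        - (M ^ 2 + M * (A ^ 3 - (A ^ 2 + A + 1)) * M * (1 + A * M)
          + M * A * (A ^ 3 - (A ^ 2 + A + 1)) * M + M ^ 2 * A * M
          + (M * A ^ 2 * M + (M * A) ^ 2 * M) * (A * M + A ^ 2 * M)
          - (M * A) ^ 2 * (M * A ^ 2 * M + (M * A) ^ 2 * M)) := by noncomm_ring
    _ = 0 := by rw [he, hD, hA, hM, h3]; simp

theorem mul_eq_zero_of_pow_mul_eq {N v : R} (h3 : (3 : R) = 0)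
    (h1 : N ^ 3 * v = N ^ 2 * v + N * v)
    (h2 : N ^ 4 * v = N ^ 3 * v - N ^ 2 * v + N * v) : N * v = 0 := by
  have r1 := sub_eq_zero.mpr h1
  have r2 := sub_eq_zero.mpr h2
  calc N * v = (1 + N) * ((N ^ 4 * v - (N ^ 3 * v - N ^ 2 * v + N * v))
          - N * (N ^ 3 * v - (N ^ 2 * v + N * v)))
        - 2 * (N ^ 3 * v - (N ^ 2 * v + N * v)) - 3 * (N ^ 2 * v) := by noncomm_ring
    _ = 0 := by rw [r1, r2, h3]; simp

theorem sq_sub_add_one_mul_sq_add_one_eq_one (h3 : (3 : R) = 0)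
    (hA : A ^ 3 = A ^ 2 + A + 1) : (A ^ 2 - A + 1) * (A ^ 2 + 1) = 1 :=
  calc (A ^ 2 - A + 1) * (A ^ 2 + 1)
      = 1 + A * (A ^ 3 - (A ^ 2 + A + 1)) + 3 * A ^ 2 := by noncomm_ring
    _ = 1 := by rw [hA, h3]; simp

theorem eq_zero_of_add_pow_three_eq (h3 : (3 : R) = 0) (hA : A ^ 3 = A ^ 2 + A + 1)
    (hM : M ^ 2 = 0) (hB : (A + M) ^ 3 = A + M) : M = 0 := by
  have he := sq_add_one_mul_add_eq_zero hA hM hB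
  have hD := mul_sq_mul_add_eq_zero hM he
  have hMAM : M * A * M = 0 :=
    mul_eq_zero_of_pow_mul_eq h3 (mul_pow_three_mul_eq h3 hA hM he hD)
      (mul_pow_four_mul_eq h3 hA hM he hD)
  have hMA2M : M * A ^ 2 * M = 0 := by
    rwa [show (M * A) ^ 2 * M = M * A * (M * A * M) by noncomm_ring, hMAM, mul_zero,
      add_zero] at hD
  have hPM : (A ^ 2 + 1) * M = 0 := by
    rwa [show A * M * A * M = A * (M * A * M) by noncomm_ring, hMAM, mul_zero, hMA2M, add_zero,
      add_zero] at he
  calc M = (A ^ 2 - A + 1) * (A ^ 2 + 1) * M := by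
        rw [sq_sub_add_one_mul_sq_add_one_eq_one h3 hA, one_mul]
    _ = 0 := by rw [mul_assoc, hPM, mul_zero]

end CharThree

theorem IsDiagonalizable.pow_card_eq {F n : Type*} [Field F] [Fintype F] [Fintype n]
    [DecidableEq n] {D : Matrix n n F} (hD : IsDiagonalizable D) :
    D ^ Fintype.card F = D := by
  obtain ⟨U, ⟨u, rfl⟩, hdiag⟩ := hD
  rw [← coe_units_inv] at hdiag
  have h : (((u⁻¹ : (Matrix n n F)ˣ) : Matrix n n F) * D * u) ^ Fintype.card F
      = ((u⁻¹ : (Matrix n n F)ˣ) : Matrix n n F) * D * u := by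
    rw [← hdiag.diagonal_diag, diagonal_pow]
    congr 1
    ext i
    exact FiniteField.pow_card _
  rw [Units.conj_pow'] at h
  simpa [← mul_assoc] using
    congrArg (fun X => (u : Matrix n n F) * X * ((u⁻¹ : (Matrix n n F)ˣ) : Matrix n n F)) h

/-- Step (5): over 𝔽₃, if A³ = A² + A + I, M² = 0 and (A+M)³ = A+M, then
M = 0; in particular, if A³ ≠ A then no square-zero matrix makes A
diagonalizable after perturbation. -/
theorem stmt_18 {n : ℕ} (A M : Matrix (Fin n) (Fin n) (ZMod 3))
    (hA : A ^ 3 = A ^ 2 + A + 1) (hM : M ^ 2 = 0)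
    (hD : (A + M) ^ 3 = A + M) :
    M = 0 ∧ (A ^ 3 ≠ A →
      ¬ ∃ M' : Matrix (Fin n) (Fin n) (ZMod 3),
          M' ^ 2 = 0 ∧ IsDiagonalizable (A + M')) := by
  have h3 : (3 : Matrix (Fin n) (Fin n) (ZMod 3)) = 0 := by
    ext i j
    simp [ofNat_apply, show (3 : ZMod 3) = 0 from rfl]
  refine ⟨eq_zero_of_add_pow_three_eq h3 hA hM hD, ?_⟩
  rintro hA3 ⟨M', hM', hdiag⟩
  have hD' : (A + M') ^ 3 = A + M' := by simpa using hdiag.pow_card_eq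
  obtain rfl := eq_zero_of_add_pow_three_eq h3 hA hM' hD'
  exact hA3 (by simpa using hD')
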